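/- arXiv:1001.0851 — 6 statements merged into one kernel-verified Lean document; each statement's English description precedes it below -/
import Mathlib

section
/- Let (g, ⋆) be a prelie algebra and extend ⋆ to the Oudom–Guin associative product * on S(g) (defined by P * Q = Σ P^{(1)}(P^{(2)} ⋆ Q)). Then for all n ≥ 1, g ⋆ S^n(g) ⊆ S^n(g). -/
/-!
Oudom–Guin extension of a prelie product. We model the prelie algebra g as the
degree-one component V of S(g) = `MvPolynomial σ K` (σ indexing a basis of g), and
quantify over a bilinear map `star` on S(g) satisfying the defining equations of the
Oudom–Guin extension:
  1 ⋆ P = P,  (xP) ⋆ y = x ⋆ (P ⋆ y) − (x ⋆ P) ⋆ y,  P ⋆ (QR) = Σ (P⁽¹⁾ ⋆ Q)(P⁽²⁾ ⋆ R),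
together with the prelie axioms on g.
-/

open TensorProduct

noncomputable section

/-- The coproduct of the symmetric coalgebra. -/
def scomul (K : Type*) [Field K] (σ : Type*) :
    MvPolynomial σ K →ₐ[K] MvPolynomial σ K ⊗[K] MvPolynomial σ K :=
  MvPolynomial.aeval fun i => MvPolynomial.X i ⊗ₜ[K] 1 + 1 ⊗ₜ[K] MvPolynomial.X i

/-- S_{≥2}(g) = ⊕_{n ≥ 2} S^n(g). -/
def Sge2 (K : Type*) [Field K] (σ : Type*) : Submodule K (MvPolynomial σ K) :=
  ⨆ n : ℕ, ⨆ _ : 2 ≤ n, MvPolynomial.homogeneousSubmodule σ K n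

variable {K : Type*} [Field K] [CharZero K] {σ : Type*}

/-- The hypotheses on `star`: it restricts to a prelie product on g = S¹(g) and satisfies
the defining recursions of the Oudom–Guin extension to S(g). -/
structure IsOGExtension
    (star : MvPolynomial σ K →ₗ[K] MvPolynomial σ K →ₗ[K] MvPolynomial σ K) : Prop where
  one_star : ∀ P : MvPolynomial σ K, star 1 P = P
  mem_g : ∀ x ∈ MvPolynomial.homogeneousSubmodule σ K 1,
    ∀ y ∈ MvPolynomial.homogeneousSubmodule σ K 1,
      star x y ∈ MvPolynomial.homogeneousSubmodule σ K 1
  prelie : ∀ x ∈ MvPolynomial.homogeneousSubmodule σ K 1,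
    ∀ y ∈ MvPolynomial.homogeneousSubmodule σ K 1,
      ∀ z ∈ MvPolynomial.homogeneousSubmodule σ K 1,
        star (star x y) z - star x (star y z) = star (star y x) z - star y (star x z)
  mul_star : ∀ x ∈ MvPolynomial.homogeneousSubmodule σ K 1,
    ∀ P : MvPolynomial σ K, ∀ y ∈ MvPolynomial.homogeneousSubmodule σ K 1,
      star (x * P) y = star x (star P y) - star (star x P) y
  star_mul : ∀ P Q R : MvPolynomial σ K,
    star P (Q * R) =
      LinearMap.mul' K (MvPolynomial σ K)
        (TensorProduct.map (star.flip Q) (star.flip R) (scomul K σ P))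

/-- The associated associative product P * Q = Σ P⁽¹⁾ (P⁽²⁾ ⋆ Q). -/
def ogMul (star : MvPolynomial σ K →ₗ[K] MvPolynomial σ K →ₗ[K] MvPolynomial σ K)
    (P Q : MvPolynomial σ K) : MvPolynomial σ K :=
  LinearMap.mul' K (MvPolynomial σ K)
    (TensorProduct.map LinearMap.id (star.flip Q) (scomul K σ P))

/-!
For `x ∈ g` the coproduct is primitive, `Δx = x ⊗ 1 + 1 ⊗ x`, so together with `1 ⋆ P = P` the
rule `P ⋆ (QR) = Σ (P⁽¹⁾ ⋆ Q)(P⁽²⁾ ⋆ R)` makes `x ⋆ -` a derivation of `S(g)`. A derivation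
preserving `S¹(g)` preserves every `Sⁿ(g) = S¹(g)ⁿ`.
-/

open MvPolynomial

theorem MvPolynomial.derivation_apply_mem_homogeneousSubmodule {R σ : Type*} [CommSemiring R]
    (D : Derivation R (MvPolynomial σ R) (MvPolynomial σ R))
    (hD : ∀ p ∈ homogeneousSubmodule σ R 1, D p ∈ homogeneousSubmodule σ R 1) :
    ∀ (n : ℕ) {p : MvPolynomial σ R}, p ∈ homogeneousSubmodule σ R n →
      D p ∈ homogeneousSubmodule σ R n
  | 0, p, hp => by
    rw [← homogeneousSubmodule_one_pow, pow_zero, Submodule.mem_one] at hp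
    obtain ⟨c, rfl⟩ := hp
    rw [D.map_algebraMap]
    exact zero_mem _
  | n + 1, p, hp => by
    rw [← homogeneousSubmodule_one_pow, pow_succ', homogeneousSubmodule_one_pow] at hp
    refine Submodule.mul_induction_on hp (fun a ha b hb => ?_) fun a b ha hb => ?_
    · rw [D.leibniz, smul_eq_mul, smul_eq_mul, mul_comm a]
      exact add_mem ((derivation_apply_mem_homogeneousSubmodule D hD n hb).mul ha)
        (hb.mul (hD a ha))
    · rw [D.map_add]
      exact add_mem ha hb

section

variable {K σ : Type*} [Field K]

theorem scomul_of_mem_homogeneousSubmodule_one {x : MvPolynomial σ K}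
    (hx : x ∈ homogeneousSubmodule σ K 1) :
    scomul K σ x = x ⊗ₜ[K] 1 + 1 ⊗ₜ[K] x := by
  rw [homogeneousSubmodule_one_eq_span_X] at hx
  induction hx using Submodule.span_induction with
  | mem _ h =>
    obtain ⟨i, rfl⟩ := h
    simp [scomul]
  | zero => simp
  | add a b _ _ ha hb => rw [map_add, ha, hb, add_tmul, tmul_add]; abel
  | smul c a _ ha => rw [map_smul, ha, smul_add, smul_tmul', tmul_smul]

namespace IsOGExtension

variable {star : MvPolynomial σ K →ₗ[K] MvPolynomial σ K →ₗ[K] MvPolynomial σ K}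

theorem star_mul_of_mem_homogeneousSubmodule_one (hstar : IsOGExtension star)
    {x : MvPolynomial σ K} (hx : x ∈ homogeneousSubmodule σ K 1) (Q R : MvPolynomial σ K) :
    star x (Q * R) = star x Q * R + Q * star x R := by
  rw [hstar.star_mul, scomul_of_mem_homogeneousSubmodule_one hx]
  simp [hstar.one_star]

def derivation (hstar : IsOGExtension star) {x : MvPolynomial σ K}
    (hx : x ∈ homogeneousSubmodule σ K 1) : Derivation K (MvPolynomial σ K) (MvPolynomial σ K) :=
  Derivation.mk' (star x) fun Q R => by
    rw [hstar.star_mul_of_mem_homogeneousSubmodule_one hx, smul_eq_mul, smul_eq_mul, mul_comm,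
      add_comm]

end IsOGExtension

end

/-- for all n ≥ 1, g ⋆ Sⁿ(g) ⊆ Sⁿ(g). -/
theorem stmt3 (star : MvPolynomial σ K →ₗ[K] MvPolynomial σ K →ₗ[K] MvPolynomial σ K)
    (hstar : IsOGExtension star) :
    ∀ n : ℕ, 1 ≤ n → ∀ x ∈ MvPolynomial.homogeneousSubmodule σ K 1,
      ∀ P ∈ MvPolynomial.homogeneousSubmodule σ K n,
        star x P ∈ MvPolynomial.homogeneousSubmodule σ K n := by
  intro n _ x hx P hP
  exact derivation_apply_mem_homogeneousSubmodule (hstar.derivation hx) (hstar.mem_g x hx) n hP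
end
end

section
/- Let (g, ⋆) be a prelie algebra with the extended product * on S(g) as in the Oudom–Guin construction. Then S_{≥2}(g) = ⊕_{n≥2} S^n(g) is a left ideal of (S(g), *). -/
/-!
Oudom–Guin extension of a prelie product. We model the prelie algebra g as the
degree-one component V of S(g) = `MvPolynomial σ K` (σ indexing a basis of g), and
quantify over a bilinear map `star` on S(g) satisfying the defining equations of the
Oudom–Guin extension:
  1 ⋆ P = P,  (xP) ⋆ y = x ⋆ (P ⋆ y) − (x ⋆ P) ⋆ y,  P ⋆ (QR) = Σ (P⁽¹⁾ ⋆ Q)(P⁽²⁾ ⋆ R),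
together with the prelie axioms on g.

Each `x ∈ g` acts on `S(g)` through `Q ↦ x ⋆ Q`, a derivation extending the prelie product
on `g` (apply `P ⋆ (QR) = Σ (P⁽¹⁾ ⋆ Q)(P⁽²⁾ ⋆ R)` with `Δ x = x ⊗ 1 + 1 ⊗ x`), so it preserves
degrees. Then `(xP) ⋆ y = x ⋆ (P ⋆ y) − (x ⋆ P) ⋆ y` shows, by induction on the degree of `P`,
that `P ⋆ y ∈ g` for `y ∈ g`, and `P ⋆ (yQ) = Σ (P⁽¹⁾ ⋆ y)(P⁽²⁾ ⋆ Q)` shows, by induction on the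
degree of `Q`, that every `P ⋆ –` preserves each `Sⁿ(g)` with `n ≥ 1`. Hence
`P * Q = Σ P⁽¹⁾ (P⁽²⁾ ⋆ Q)` lies in `S(g) · S_{≥2}(g) ⊆ S_{≥2}(g)` whenever `Q ∈ S_{≥2}(g)`.
-/

open TensorProduct

noncomputable section

variable {K : Type*} [Field K] [CharZero K] {σ : Type*}

open MvPolynomial

namespace MvPolynomial

variable {R σ : Type*} [CommSemiring R]

theorem homogeneousSubmodule_zero_le {N : Submodule R (MvPolynomial σ R)} (h : 1 ∈ N) :
    homogeneousSubmodule σ R 0 ≤ N := by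
  rwa [homogeneousSubmodule_zero, Submodule.one_le]

theorem homogeneousSubmodule_succ_le {N : Submodule R (MvPolynomial σ R)} {n : ℕ}
    (h : ∀ i, ∀ Q ∈ homogeneousSubmodule σ R n, X i * Q ∈ N) :
    homogeneousSubmodule σ R (n + 1) ≤ N := by
  rw [← homogeneousSubmodule_one_pow, pow_succ', homogeneousSubmodule_one_pow,
    homogeneousSubmodule_one_eq_span_X, Submodule.mul_le]
  intro x hx Q hQ
  induction hx using Submodule.span_induction with
  | mem x hx =>
    obtain ⟨i, rfl⟩ := hx
    exact h i Q hQ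
  | zero => simp
  | add x y _ _ hx hy => simpa only [add_mul] using add_mem hx hy
  | smul c x _ hx => simpa only [smul_mul_assoc] using N.smul_mem c hx

end MvPolynomial

theorem TensorProduct.mul'_map_mem_mul {R A M N : Type*} [CommSemiring R] [Semiring A]
    [Algebra R A] [AddCommMonoid M] [Module R M] [AddCommMonoid N] [Module R N]
    {S T : Submodule R A} {f : M →ₗ[R] A} {g : N →ₗ[R] A} (hf : ∀ m, f m ∈ S)
    (hg : ∀ n, g n ∈ T) (t : M ⊗[R] N) :
    LinearMap.mul' R A (TensorProduct.map f g t) ∈ S * T := by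
  induction t using TensorProduct.induction_on with
  | zero => simp
  | tmul m n =>
    simpa only [map_tmul, LinearMap.mul'_apply] using Submodule.mul_mem_mul (hf m) (hg n)
  | add t u ht hu => simpa only [map_add] using add_mem ht hu

section Sge2

variable {K σ : Type*} [Field K]

theorem homogeneousSubmodule_le_Sge2 {n : ℕ} (hn : 2 ≤ n) :
    homogeneousSubmodule σ K n ≤ Sge2 K σ :=
  le_iSup₂_of_le n hn le_rfl

theorem top_mul_Sge2_le : ⊤ * Sge2 K σ ≤ Sge2 K σ := by
  refine Submodule.mul_le.mpr fun a _ Q hQ => ?_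
  suffices Sge2 K σ ≤ (Sge2 K σ).comap (LinearMap.mulLeft K a) from this hQ
  refine iSup₂_le fun n hn Q hQ => ?_
  rw [Submodule.mem_comap, LinearMap.mulLeft_apply, ← sum_homogeneousComponent a,
    Finset.sum_mul]
  exact sum_mem fun k _ =>
    homogeneousSubmodule_le_Sge2 (by omega) ((homogeneousComponent_isHomogeneous k a).mul hQ)

end Sge2

namespace IsOGExtension

variable {K σ : Type*} [Field K]
  {star : MvPolynomial σ K →ₗ[K] MvPolynomial σ K →ₗ[K] MvPolynomial σ K}

theorem star_X_mul (hstar : IsOGExtension star) (i : σ) (A B : MvPolynomial σ K) :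
    star (X i) (A * B) = star (X i) A * B + A * star (X i) B := by
  simp [hstar.star_mul, scomul, LinearMap.mul'_apply, hstar.one_star]

theorem star_X_one (hstar : IsOGExtension star) (i : σ) : star (X i) 1 = 0 := by
  simpa using hstar.star_X_mul i 1 1

theorem star_X_mem_homogeneousSubmodule (hstar : IsOGExtension star) (i : σ) {n : ℕ}
    {Q : MvPolynomial σ K} (hQ : Q ∈ homogeneousSubmodule σ K n) :
    star (X i) Q ∈ homogeneousSubmodule σ K n := by
  induction n generalizing Q with
  | zero =>
    refine homogeneousSubmodule_zero_le (N := (homogeneousSubmodule σ K 0).comap (star (X i)))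
      ?_ hQ
    simp [hstar.star_X_one]
  | succ n ih =>
    refine homogeneousSubmodule_succ_le
      (N := (homogeneousSubmodule σ K (n + 1)).comap (star (X i))) (fun j Q hQ => ?_) hQ
    rw [Submodule.mem_comap, hstar.star_X_mul, add_comm n]
    exact add_mem ((hstar.mem_g _ (isHomogeneous_X K i) _ (isHomogeneous_X K j)).mul hQ)
      ((isHomogeneous_X K j).mul (ih hQ))

theorem star_mem_homogeneousSubmodule_one (hstar : IsOGExtension star) (P : MvPolynomial σ K)
    {y : MvPolynomial σ K} (hy : y ∈ homogeneousSubmodule σ K 1) :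
    star P y ∈ homogeneousSubmodule σ K 1 := by
  have of_homogeneous : ∀ m, ∀ P ∈ homogeneousSubmodule σ K m,
      star P y ∈ homogeneousSubmodule σ K 1 := by
    intro m
    induction m with
    | zero =>
      exact homogeneousSubmodule_zero_le
        (N := (homogeneousSubmodule σ K 1).comap (star.flip y)) (by simpa [hstar.one_star])
    | succ m ih =>
      refine homogeneousSubmodule_succ_le
        (N := (homogeneousSubmodule σ K 1).comap (star.flip y)) fun i P hP => ?_
      rw [Submodule.mem_comap, LinearMap.flip_apply,
        hstar.mul_star _ (isHomogeneous_X K i) _ _ hy]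
      exact sub_mem (hstar.mem_g _ (isHomogeneous_X K i) _ (ih P hP))
        (ih _ (hstar.star_X_mem_homogeneousSubmodule i hP))
  rw [← sum_homogeneousComponent P, map_sum, LinearMap.sum_apply]
  exact sum_mem fun m _ => of_homogeneous m _ (homogeneousComponent_isHomogeneous m P)

theorem star_mem_homogeneousSubmodule_succ (hstar : IsOGExtension star) (P : MvPolynomial σ K)
    {n : ℕ} {Q : MvPolynomial σ K} (hQ : Q ∈ homogeneousSubmodule σ K (n + 1)) :
    star P Q ∈ homogeneousSubmodule σ K (n + 1) := by
  induction n generalizing P Q with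
  | zero => exact hstar.star_mem_homogeneousSubmodule_one P hQ
  | succ n ih =>
    suffices homogeneousSubmodule σ K (n + 2) ≤
        ⨅ P, (homogeneousSubmodule σ K (n + 2)).comap (star P) from
      (Submodule.mem_iInf _).mp (this hQ) P
    refine homogeneousSubmodule_succ_le fun j Q hQ => (Submodule.mem_iInf _).mpr fun P => ?_
    rw [Submodule.mem_comap, hstar.star_mul]
    have := mul'_map_mem_mul (f := star.flip (X j)) (g := star.flip Q)
      (fun a => hstar.star_mem_homogeneousSubmodule_one a (isHomogeneous_X K j))
      (fun b => ih b hQ) (scomul K σ P)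
    rw [show n + 2 = 1 + (n + 1) by omega]
    exact homogeneousSubmodule_mul 1 (n + 1) this

theorem star_mem_Sge2 (hstar : IsOGExtension star) (P : MvPolynomial σ K)
    {Q : MvPolynomial σ K} (hQ : Q ∈ Sge2 K σ) : star P Q ∈ Sge2 K σ := by
  suffices Sge2 K σ ≤ (Sge2 K σ).comap (star P) from this hQ
  refine iSup₂_le fun n hn Q hQ => ?_
  obtain ⟨m, rfl⟩ : ∃ m, n = m + 1 := ⟨n - 1, by omega⟩
  exact homogeneousSubmodule_le_Sge2 hn (hstar.star_mem_homogeneousSubmodule_succ P hQ)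

end IsOGExtension

/-- S_{≥2}(g) is a left ideal of (S(g), *). -/
theorem stmt4 (star : MvPolynomial σ K →ₗ[K] MvPolynomial σ K →ₗ[K] MvPolynomial σ K)
    (hstar : IsOGExtension star) :
    ∀ P : MvPolynomial σ K, ∀ Q ∈ Sge2 K σ, ogMul star P Q ∈ Sge2 K σ := by
  intro P Q hQ
  exact top_mul_Sge2_le <| mul'_map_mem_mul (S := ⊤) (f := LinearMap.id)
    (fun _ => Submodule.mem_top) (fun b => hstar.star_mem_Sge2 b hQ) (scomul K σ P)
end
end

section
/- Let g be a semisimple Lie algebra, (M,m) a very good pointed g-module, and M' a submodule of M. Writing m = m' + m'' along a module decomposition M = M' ⊕ M'', the map g → M', x ↦ x·m' is surjective. -/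
/-!
STATEMENT 13: g a semisimple Lie algebra, (M,m) a very good pointed g-module, M' a
submodule of M; writing m = m' + m'' along a module decomposition M = M' ⊕ M'', the map
g → M', x ↦ x·m' is surjective.
-/

theorem stmt13 (K : Type*) [Field K] (g : Type*) [LieRing g] [LieAlgebra K g]
    [LieAlgebra.IsSemisimple K g]
    (M : Type*) [AddCommGroup M] [Module K M] [LieRingModule g M] [LieModule K g M]
    (m : M) (hvg : Function.Bijective fun x : g => ⁅x, m⁆)
    (N N' : LieSubmodule K g M)
    (hsup : N ⊔ N' = ⊤) (hinf : N ⊓ N' = ⊥)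
    (m' m'' : M) (hm' : m' ∈ N) (hm'' : m'' ∈ N') (hm : m = m' + m'') :
    ∀ u ∈ N, ∃ x : g, ⁅x, m'⁆ = u := by
  intro u hu
  obtain ⟨x, hx⟩ := hvg.2 u
  simp only at hx
  refine ⟨x, ?_⟩
  have h1 : ⁅x, m'⁆ ∈ N := N.lie_mem hm'
  have h2 : ⁅x, m''⁆ ∈ N' := N'.lie_mem hm''
  have key : u - ⁅x, m'⁆ ∈ N ⊓ N' := by
    constructor
    · exact N.sub_mem hu h1
    · have : u - ⁅x, m'⁆ = ⁅x, m''⁆ := by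
        rw [← hx, hm, lie_add]; abel
      rw [this]; exact h2
  rw [hinf, LieSubmodule.mem_bot, sub_eq_zero] at key
  exact key.symm
end

section
/- For n ≥ 9, there exist no natural numbers a, b, c with n² − 1 = a·n + b·n(n−1)/2 + c·n(n+1)/2. -/
/-!
STATEMENT 15: for n ≥ 9, there are no natural numbers a, b, c with
n² − 1 = a·n + b·n(n−1)/2 + c·n(n+1)/2.
-/

theorem stmt15 (n : ℕ) (hn : 9 ≤ n) :
    ¬ ∃ a b c : ℕ, n ^ 2 - 1 = a * n + b * (n * (n - 1) / 2) + c * (n * (n + 1) / 2) := by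
  rintro ⟨a, b, c, h⟩
  have h2 : 2 ∣ n * (n - 1) := by
    obtain ⟨m, rfl⟩ : ∃ m, n = m + 1 := ⟨n - 1, by omega⟩
    simpa [Nat.mul_comm] using (Nat.even_mul_succ_self m).two_dvd
  have h3 : 2 ∣ n * (n + 1) := (Nat.even_mul_succ_self n).two_dvd
  have hb : b * (n * (n - 1) / 2) * 2 = b * (n * (n - 1)) := by
    rw [Nat.mul_assoc, Nat.div_mul_cancel h2]
  have hc : c * (n * (n + 1) / 2) * 2 = c * (n * (n + 1)) := by
    rw [Nat.mul_assoc, Nat.div_mul_cancel h3]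
  have key : (n ^ 2 - 1) * 2 = a * n * 2 + b * (n * (n - 1)) + c * (n * (n + 1)) := by
    rw [h, Nat.add_mul, Nat.add_mul, hb, hc]
  have hdvd : n ∣ (n ^ 2 - 1) * 2 := by
    rw [key]
    exact Nat.dvd_add (Nat.dvd_add ⟨a * 2, by ring⟩ ⟨b * (n - 1), by ring⟩)
      ⟨c * (n + 1), by ring⟩
  have h1 : (n ^ 2 - 1) * 2 = n * (2 * n) - 2 := by
    have : 1 ≤ n ^ 2 := by nlinarith
    ring_nf
    omega
  have hd2 : n ∣ 2 := by
    have := Nat.dvd_sub (Dvd.intro (2 * n) rfl) hdvd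
    rwa [h1, Nat.sub_sub_self (by nlinarith)] at this
  have := Nat.le_of_dvd (by norm_num) hd2
  omega
end

section
/- Let n ≥ 2 and consider so_{2n+1}(ℂ) acting on M_{2n+1,n}(ℂ) by matrix multiplication on the left. For every m ∈ M_{2n+1,n}(ℂ), the linear map so_{2n+1} → M_{2n+1,n}(ℂ), A ↦ A·m, is not bijective. -/
/-!
STATEMENT 17: for n ≥ 2, so_{2n+1}(ℂ) acts on M_{2n+1,n}(ℂ) by left matrix
multiplication, and for every m ∈ M_{2n+1,n}(ℂ) the map A ↦ A·m is not bijective.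
We realize so_{2n+1} = {A | Aᵀ J + J A = 0} with J = [[0,I,0],[I,0,0],[0,0,1]],
matching the block description of the paper; rows/columns are indexed by
(Fin n ⊕ Fin n) ⊕ Unit.
-/

noncomputable section

open Matrix

/-- The matrix of the symmetric bilinear form defining so_{2n+1}. -/
def Jmat (n : ℕ) : Matrix ((Fin n ⊕ Fin n) ⊕ Unit) ((Fin n ⊕ Fin n) ⊕ Unit) ℂ :=
  Matrix.fromBlocks (Matrix.fromBlocks 0 1 1 0) 0 0 1

lemma Jmat_transpose (n : ℕ) : (Jmat n)ᵀ = Jmat n := by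
  simp [Jmat, Matrix.fromBlocks_transpose]

lemma Jmat_mul_Jmat (n : ℕ) : Jmat n * Jmat n = 1 := by
  simp [Jmat, Matrix.fromBlocks_multiply, ← Matrix.fromBlocks_one]

theorem stmt17 (n : ℕ) (hn : 2 ≤ n)
    (m : Matrix ((Fin n ⊕ Fin n) ⊕ Unit) (Fin n) ℂ) :
    ¬ Function.Bijective
      (fun A : {A : Matrix ((Fin n ⊕ Fin n) ⊕ Unit) ((Fin n ⊕ Fin n) ⊕ Unit) ℂ //
          Aᵀ * Jmat n + Jmat n * A = 0} => A.1 * m) := by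
  intro hbij
  set f := m.vecMulLinear with hf
  -- kernel of vecMul has finrank ≥ 2
  have hcard : Module.finrank ℂ (((Fin n ⊕ Fin n) ⊕ Unit) → ℂ) = 2 * n + 1 := by
    simp [Module.finrank_pi, two_mul]
  have hrn := LinearMap.finrank_range_add_finrank_ker f
  have hrange : Module.finrank ℂ (LinearMap.range f) ≤ n := by
    have := Submodule.finrank_le (LinearMap.range f)
    simpa using this
  have hker2 : 2 ≤ Module.finrank ℂ (LinearMap.ker f) := by
    omega
  -- get u ≠ 0 in the kernel
  have hkerne : LinearMap.ker f ≠ ⊥ := by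
    intro h
    rw [h] at hker2
    simp at hker2
  obtain ⟨u, hu, hu0⟩ := Submodule.ne_bot_iff _ |>.1 hkerne
  -- get w in the kernel, not in span of u
  have hspanlt : (ℂ ∙ u) < LinearMap.ker f := by
    rcases lt_or_eq_of_le ((Submodule.span_singleton_le_iff_mem u _).2 hu) with h | h
    · exact h
    · exfalso
      rw [← h, finrank_span_singleton hu0] at hker2
      omega
  obtain ⟨w, hw, hwu⟩ := SetLike.exists_of_lt hspanlt
  -- the skew matrix B and A = J * B
  set B : Matrix ((Fin n ⊕ Fin n) ⊕ Unit) ((Fin n ⊕ Fin n) ⊕ Unit) ℂ :=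
    Matrix.of (fun i j => u i * w j - u j * w i) with hB
  have hBskew : Bᵀ = -B := by
    ext i j
    simp only [hB, Matrix.transpose_apply, Matrix.of_apply, Matrix.neg_apply]
    ring
  have hBm : B * m = 0 := by
    have hu' : u ᵥ* m = 0 := hu
    have hw' : w ᵥ* m = 0 := hw
    ext i k
    have h1 : ∑ j, w j * m j k = 0 := congrFun hw' k
    have h2 : ∑ j, u j * m j k = 0 := congrFun hu' k
    simp only [hB, Matrix.mul_apply, Matrix.of_apply, Matrix.zero_apply]
    calc ∑ j, (u i * w j - u j * w i) * m j k
        = u i * ∑ j, w j * m j k - w i * ∑ j, u j * m j k := by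
          rw [Finset.mul_sum, Finset.mul_sum, ← Finset.sum_sub_distrib]
          congr 1; ext j; ring
      _ = 0 := by rw [h1, h2]; ring
  have hBne : B ≠ 0 := by
    intro h
    apply hwu
    -- all 2x2 minors vanish ⇒ w ∈ span u
    obtain ⟨i0, hi0⟩ := Function.ne_iff.1 hu0
    simp only [Pi.zero_apply] at hi0
    refine Submodule.mem_span_singleton.2 ⟨w i0 / u i0, ?_⟩
    ext j
    have := congrFun (congrFun h i0) j
    simp only [hB, Matrix.of_apply, Matrix.zero_apply] at this
    simp only [Pi.smul_apply, smul_eq_mul]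
    rw [div_mul_eq_mul_div, div_eq_iff hi0]
    linear_combination -this
  set A := Jmat n * B with hA
  have hAmem : Aᵀ * Jmat n + Jmat n * A = 0 := by
    rw [hA, Matrix.transpose_mul, Jmat_transpose, Matrix.mul_assoc, Jmat_mul_Jmat,
      Matrix.mul_one, ← Matrix.mul_assoc, Jmat_mul_Jmat, Matrix.one_mul, hBskew]
    exact neg_add_cancel B
  have h0mem : (0 : Matrix ((Fin n ⊕ Fin n) ⊕ Unit) ((Fin n ⊕ Fin n) ⊕ Unit) ℂ)ᵀ * Jmat n
      + Jmat n * 0 = 0 := by simp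
  have hAne : A ≠ 0 := by
    intro h
    apply hBne
    have : Jmat n * (Jmat n * B) = Jmat n * 0 := by rw [← hA, h]
    rwa [← Matrix.mul_assoc, Jmat_mul_Jmat, Matrix.one_mul, Matrix.mul_zero] at this
  have : (⟨A, hAmem⟩ : {A : Matrix ((Fin n ⊕ Fin n) ⊕ Unit) ((Fin n ⊕ Fin n) ⊕ Unit) ℂ //
      Aᵀ * Jmat n + Jmat n * A = 0}) = ⟨0, h0mem⟩ := by
    apply hbij.injective
    simp only
    rw [hA, Matrix.mul_assoc, hBm, Matrix.mul_zero, Matrix.zero_mul]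
  exact hAne (congrArg Subtype.val this)
end
end

section
/- Let A be a dendriform Hopf algebra connected as a coalgebra, with A^{≺2} = Prim(A) ≺ A_+. Then: (1) A_+ = Prim(A) ⊕ A^{≺2}; (2) A^{≺2} = A_+ ≺ A_+; (3) A^{≺2} is a left ideal of A for the product * = ≺ + ≻. -/
/-!
Dendriform Hopf algebras. We model the augmentation ideal A_+ of a dendriform Hopf
algebra A as a vector space B with two bilinear products ≺, ≻ and a reduced coproduct
Δ̃ : B → B ⊗ B, subject to the dendriform axioms (1)-(3) and the compatibilities
(4)-(5) between Δ̃ and ≺, ≻ (in Sweedler-free form, using the middle-four interchange).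
-/

open TensorProduct

noncomputable section

variable {K B : Type*} [Field K] [AddCommGroup B] [Module K B]

/-- The filtration by the kernels of the iterated reduced coproducts
(over a field, ker(Δ̃⁽ⁿ⁺¹⁾) = Δ̃⁻¹(ker(Δ̃⁽ⁿ⁾) ⊗ B)). -/
def coradFilt (delta : B →ₗ[K] B ⊗[K] B) : ℕ → Submodule K B
  | 0 => LinearMap.ker delta
  | n + 1 => Submodule.comap delta
      (LinearMap.range (TensorProduct.mapIncl (coradFilt delta n) (⊤ : Submodule K B)))

/-- The dendriform Hopf algebra axioms. -/
structure IsDendriformHopf (prec succ : B →ₗ[K] B →ₗ[K] B)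
    (delta : B →ₗ[K] B ⊗[K] B) : Prop where
  coassoc : (TensorProduct.assoc K B B B).toLinearMap ∘ₗ
      TensorProduct.map delta (LinearMap.id : B →ₗ[K] B) ∘ₗ delta =
    TensorProduct.map (LinearMap.id : B →ₗ[K] B) delta ∘ₗ delta
  ax1 : ∀ x y z : B, prec (prec x y) z = prec x ((prec + succ) y z)
  ax2 : ∀ x y z : B, prec (succ x y) z = succ x (prec y z)
  ax3 : ∀ x y z : B, succ ((prec + succ) x y) z = succ x (succ y z)
  ax4 : ∀ a b : B,
    delta (prec a b) =
      TensorProduct.map (TensorProduct.lift (prec + succ)) (TensorProduct.lift prec)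
        (TensorProduct.tensorTensorTensorComm K B B B B (delta a ⊗ₜ[K] delta b))
      + TensorProduct.map ((prec + succ).flip b) (LinearMap.id : B →ₗ[K] B) (delta a)
      + TensorProduct.map (LinearMap.id : B →ₗ[K] B) (prec a) (delta b)
      + TensorProduct.map (LinearMap.id : B →ₗ[K] B) (prec.flip b) (delta a)
      + b ⊗ₜ[K] a
  ax5 : ∀ a b : B,
    delta (succ a b) =
      TensorProduct.map (TensorProduct.lift (prec + succ)) (TensorProduct.lift succ)
        (TensorProduct.tensorTensorTensorComm K B B B B (delta a ⊗ₜ[K] delta b))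
      + TensorProduct.map ((prec + succ) a) (LinearMap.id : B →ₗ[K] B) (delta b)
      + TensorProduct.map (LinearMap.id : B →ₗ[K] B) (succ a) (delta b)
      + TensorProduct.map (LinearMap.id : B →ₗ[K] B) (succ.flip b) (delta a)
      + a ⊗ₜ[K] b

/-- Connectedness: every element is killed by some iterated reduced coproduct. -/
def IsConnectedCoalg (delta : B →ₗ[K] B ⊗[K] B) : Prop :=
  ∀ x : B, ∃ n, x ∈ coradFilt delta n

/-!
For primitive `p` one has `Δ̃ (p ≺ w) = ∑ w' ⊗ (p ≺ w'') + w ⊗ p`. So the recursion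
`π x = x - ∑ π x'' ≺ x'`, solved level by level along the coradical filtration, yields a
projection onto `Prim(A)`: coassociativity makes `Δ̃ (π x)` telescope to zero, `x - π x` lies in
`Prim(A) ≺ A_+` by construction, and `π (p ≺ w) = 0` by induction on `w`. Hence
`A_+ = Prim(A) ⊕ A^{≺2}`. As `(a ≺ w) ≺ y = a ≺ (w * y)`, `A^{≺2}` is stable under `· ≺ y`, so
the decomposition gives `A_+ ≺ A_+ = A^{≺2}`; and `x ≻ (a ≺ b) = (x ≻ a) ≺ b` makes it a left
ideal.
-/

open LinearMap

section TensorProduct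

variable {R M N : Type*}

section Semiring

variable [CommSemiring R] [AddCommMonoid M] [Module R M] [AddCommMonoid N] [Module R N]

lemma TensorProduct.range_mapIncl_le {M' : Submodule R M} {N' : Submodule R N}
    {S : Submodule R (M ⊗[R] N)} :
    range (mapIncl M' N') ≤ S ↔ ∀ m ∈ M', ∀ n ∈ N', m ⊗ₜ[R] n ∈ S := by
  rw [range_mapIncl, Submodule.map₂_le]
  rfl

lemma TensorProduct.range_mapIncl_top_left (M' : Submodule R M) :
    range (mapIncl M' (⊤ : Submodule R N)) = range (M'.subtype.rTensor N) := by
  simp_rw [range_mapIncl, rTensor, range_map, Submodule.range_subtype, range_id]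

lemma TensorProduct.range_mapIncl_top_right (N' : Submodule R N) :
    range (mapIncl (⊤ : Submodule R M) N') = range (N'.subtype.lTensor M) := by
  simp_rw [range_mapIncl, lTensor, range_map, Submodule.range_subtype, range_id]

lemma TensorProduct.range_mapIncl_bot_left :
    range (mapIncl (⊥ : Submodule R M) (⊤ : Submodule R N)) = ⊥ :=
  eq_bot_iff.2 <| range_mapIncl_le.2 fun m hm n _ => by
    rw [(Submodule.mem_bot R).1 hm, zero_tmul]
    exact zero_mem _

end Semiring

variable [CommRing R] [AddCommGroup M] [Module R M] [AddCommGroup N] [Module R N]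

lemma TensorProduct.ker_rTensor_mkQ (M' : Submodule R M) :
    ker (M'.mkQ.rTensor N) = range (mapIncl M' (⊤ : Submodule R N)) := by
  rw [rTensor_mkQ, range_mapIncl_top_left]

lemma TensorProduct.mem_range_mapIncl_ker_of_lTensor_eq_zero {P : Type*} [AddCommGroup P]
    [Module R P] [Module.Flat R M] {f : N →ₗ[R] P} {u : M ⊗[R] N} (hu : f.lTensor M u = 0) :
    u ∈ range (mapIncl (⊤ : Submodule R M) (ker f)) := by
  rw [range_mapIncl_top_right]
  exact (Module.Flat.lTensor_exact M (exact_subtype_ker_map f) u).1 hu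

end TensorProduct

section Coassoc

variable {delta : B →ₗ[K] B ⊗[K] B}
  (hco : ∀ x, TensorProduct.assoc K B B B (delta.rTensor B (delta x)) = delta.lTensor B (delta x))
include hco

/-- `coradFilt` is defined through the left legs of `delta`; by coassociativity it also controls
the right legs. Applying `id ⊗ ((· mod V) ⊗ id) ∘ delta` kills `delta x`, and flatness turns this
into membership in `B ⊗ ker`. -/
lemma delta_mem_range_mapIncl_comap {U V : Submodule K B}
    (hU : ∀ a ∈ U, delta a ∈ range (mapIncl ⊤ V)) {x : B}
    (hx : delta x ∈ range (mapIncl U ⊤)) :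
    delta x ∈ range (mapIncl ⊤ ((range (mapIncl V ⊤)).comap delta)) := by
  set ρ := V.mkQ.rTensor B ∘ₗ delta
  have hker : ker ρ = (range (mapIncl V ⊤)).comap delta := by
    rw [ker_comp, TensorProduct.ker_rTensor_mkQ]
  rw [← hker]
  refine TensorProduct.mem_range_mapIncl_ker_of_lTensor_eq_zero ?_
  rw [lTensor_comp, comp_apply, ← hco]
  refine TensorProduct.range_mapIncl_le
    (S := ker ((V.mkQ.rTensor B).lTensor B ∘ₗ (TensorProduct.assoc K B B B).toLinearMap ∘ₗ
      delta.rTensor B)).2 (fun a ha b _ => ?_) hx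
  refine TensorProduct.range_mapIncl_le
    (S := ker ((V.mkQ.rTensor B).lTensor B ∘ₗ (TensorProduct.assoc K B B B).toLinearMap ∘ₗ
      (TensorProduct.mk K (B ⊗[K] B) B).flip b)).2 (fun c _ d hdV => ?_) (hU a ha)
  simp [(Submodule.Quotient.mk_eq_zero V).2 hdV]

lemma delta_mem_range_mapIncl_of_mem_coradFilt_succ {n : ℕ} {x : B}
    (hx : x ∈ coradFilt delta (n + 1)) :
    delta x ∈ range (mapIncl ⊤ (coradFilt delta n)) := by
  induction n generalizing x with
  | zero =>
    refine range_mapIncl_mono le_rfl ?_ (delta_mem_range_mapIncl_comap hco (V := ⊥) ?_ hx)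
    · intro y hy
      simpa [coradFilt, TensorProduct.range_mapIncl_bot_left] using hy
    · intro a ha
      rw [show delta a = 0 from ha]
      exact zero_mem _
  | succ n ih => exact delta_mem_range_mapIncl_comap hco (fun a ha => ih ha) hx

end Coassoc

namespace Dendriform

variable (prec : B →ₗ[K] B →ₗ[K] B) (delta : B →ₗ[K] B ⊗[K] B)

/-- `A^{≺2} = Prim(A) ≺ A_+`. -/
def primPrec : Submodule K B :=
  Submodule.span K {z | ∃ p ∈ ker delta, ∃ w : B, z = prec p w}

def precSpan : Submodule K B :=
  Submodule.span K {z | ∃ x y : B, z = prec x y}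

/-- `a ⊗ b ↦ f b ≺ a`. -/
def precComp (f : B →ₗ[K] B) : B ⊗[K] B →ₗ[K] B :=
  TensorProduct.lift (prec ∘ₗ f).flip

/-- Approximations `π (k + 1) x = x - ∑ π k x'' ≺ x'` (with `Δ̃ x = ∑ x' ⊗ x''`) of the projection
onto `Prim(A)` along `A^{≺2}`. -/
def primProj : ℕ → B →ₗ[K] B
  | 0 => 0
  | k + 1 => LinearMap.id - precComp prec (primProj k) ∘ₗ delta

variable {prec delta}

@[simp]
lemma precComp_tmul (f : B →ₗ[K] B) (a b : B) : precComp prec f (a ⊗ₜ b) = prec (f b) a := rfl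

lemma primProj_succ_apply (k : ℕ) (y : B) :
    primProj prec delta (k + 1) y = y - precComp prec (primProj prec delta k) (delta y) := rfl

lemma primProj_succ_of_delta_eq_zero (k : ℕ) {p : B} (hp : delta p = 0) :
    primProj prec delta (k + 1) p = p := by
  simp [primProj_succ_apply, hp]

variable (hco : ∀ x,
  TensorProduct.assoc K B B B (delta.rTensor B (delta x)) = delta.lTensor B (delta x))
include hco

lemma primProj_succ_eq {n k : ℕ} {y : B} (hy : y ∈ coradFilt delta n) (hk : n < k) :
    primProj prec delta (k + 1) y = primProj prec delta k y := by
  obtain ⟨j, rfl⟩ := Nat.exists_eq_add_one_of_ne_zero (Nat.ne_zero_of_lt hk)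
  induction n generalizing y j with
  | zero => simp [primProj_succ_of_delta_eq_zero _ hy]
  | succ n ih =>
    obtain ⟨i, rfl⟩ := Nat.exists_eq_add_one_of_ne_zero (by omega : j ≠ 0)
    rw [primProj_succ_apply _ y, primProj_succ_apply _ y]
    congr 1
    refine TensorProduct.range_mapIncl_le (S := eqLocus _ _).2 (fun a _ b hb => ?_)
      (delta_mem_range_mapIncl_of_mem_coradFilt_succ hco hy)
    simp [ih hb i (by omega)]

omit hco

variable {succ : B →ₗ[K] B →ₗ[K] B} (hd : IsDendriformHopf prec succ delta)
include hd

lemma _root_.IsDendriformHopf.coassoc_apply (x : B) :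
    TensorProduct.assoc K B B B (delta.rTensor B (delta x)) = delta.lTensor B (delta x) :=
  LinearMap.congr_fun hd.coassoc x

lemma _root_.IsDendriformHopf.delta_prec_of_delta_eq_zero {p : B} (hp : delta p = 0) (w : B) :
    delta (prec p w) = (prec p).lTensor B (delta w) + w ⊗ₜ p := by
  rw [hd.ax4, hp]
  simp [lTensor]

lemma delta_precComp {V : Submodule K B} {f : B →ₗ[K] B} (hf : ∀ b ∈ V, delta (f b) = 0)
    {u : B ⊗[K] B} (hu : u ∈ range (mapIncl ⊤ V)) :
    delta (precComp prec f u) =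
      (precComp prec f).lTensor B (TensorProduct.assoc K B B B (delta.rTensor B u)) +
        f.lTensor B u := by
  refine TensorProduct.range_mapIncl_le (S := eqLocus (delta ∘ₗ precComp prec f)
    ((precComp prec f).lTensor B ∘ₗ (TensorProduct.assoc K B B B).toLinearMap ∘ₗ
      delta.rTensor B + f.lTensor B)).2 (fun a _ b hb => ?_) hu
  simp only [mem_eqLocus, comp_apply, LinearMap.add_apply, precComp_tmul, rTensor_tmul,
    lTensor_tmul, hd.delta_prec_of_delta_eq_zero (hf b hb)]
  congr 1
  generalize delta a = c
  induction c using TensorProduct.induction_on with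
  | zero => simp
  | tmul c d => simp
  | add c₁ c₂ h₁ h₂ => simp_all [TensorProduct.add_tmul]

lemma delta_primProj_eq_zero {n k : ℕ} {y : B} (hy : y ∈ coradFilt delta n) (hk : n < k) :
    delta (primProj prec delta k y) = 0 := by
  obtain ⟨j, rfl⟩ := Nat.exists_eq_add_one_of_ne_zero (Nat.ne_zero_of_lt hk)
  induction n generalizing y j with
  | zero => rwa [primProj_succ_of_delta_eq_zero _ hy]
  | succ n ih =>
    obtain ⟨i, rfl⟩ := Nat.exists_eq_add_one_of_ne_zero (by omega : j ≠ 0)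
    have hΔy := delta_mem_range_mapIncl_of_mem_coradFilt_succ hd.coassoc_apply hy
    have hprim (b : B) (hb : b ∈ coradFilt delta n) : delta (primProj prec delta (i + 1) b) = 0 :=
      ih hb i (by omega)
    have hid : (precComp prec (primProj prec delta (i + 1)) ∘ₗ delta +
        primProj prec delta (i + 1)).lTensor B (delta y) = delta y := by
      refine TensorProduct.range_mapIncl_le (S := eqLocus _ LinearMap.id).2
        (fun a _ b hb => ?_) hΔy
      simp only [mem_eqLocus, lTensor_tmul, LinearMap.add_apply, comp_apply, id_apply]
      rw [← primProj_succ_eq hd.coassoc_apply hb (by omega : n < i + 1), primProj_succ_apply,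
        add_sub_cancel]
    rw [primProj_succ_apply, map_sub, delta_precComp hd hprim hΔy, hd.coassoc_apply,
      ← comp_apply (lTensor B _), ← lTensor_comp, ← LinearMap.add_apply, ← lTensor_add, hid,
      sub_self]

lemma sub_primProj_mem_primPrec {n k : ℕ} {y : B} (hy : y ∈ coradFilt delta n) (hk : n < k) :
    y - primProj prec delta k y ∈ primPrec prec delta := by
  obtain ⟨j, rfl⟩ := Nat.exists_eq_add_one_of_ne_zero (Nat.ne_zero_of_lt hk)
  rw [primProj_succ_apply, sub_sub_cancel]
  cases n with
  | zero =>
    rw [show delta y = 0 from hy, map_zero]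
    exact zero_mem _
  | succ n =>
    refine TensorProduct.range_mapIncl_le
      (S := (primPrec prec delta).comap (precComp prec (primProj prec delta j))).2
      (fun a _ b hb => ?_) (delta_mem_range_mapIncl_of_mem_coradFilt_succ hd.coassoc_apply hy)
    exact Submodule.subset_span ⟨_, delta_primProj_eq_zero hd hb (by omega), a, rfl⟩

lemma primProj_prec_of_delta_eq_zero {p : B} (hp : delta p = 0) (w : B) (k : ℕ) :
    primProj prec delta (k + 2) (prec p w) =
      -precComp prec (primProj prec delta (k + 1)) ((prec p).lTensor B (delta w)) := by
  rw [primProj_succ_apply, hd.delta_prec_of_delta_eq_zero hp, map_add, precComp_tmul,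
    primProj_succ_of_delta_eq_zero _ hp]
  abel

lemma primProj_prec_eq_zero {p : B} (hp : delta p = 0) {n k : ℕ} {w : B}
    (hw : w ∈ coradFilt delta n) (hk : n + 1 < k) :
    primProj prec delta k (prec p w) = 0 := by
  obtain ⟨j, rfl⟩ : ∃ j, k = j + 2 := ⟨k - 2, by omega⟩
  rw [primProj_prec_of_delta_eq_zero hd hp, neg_eq_zero]
  induction n generalizing w j with
  | zero => rw [show delta w = 0 from hw, map_zero, map_zero]
  | succ n ih =>
    refine TensorProduct.range_mapIncl_le
      (S := ker (precComp prec (primProj prec delta (j + 1)) ∘ₗ (prec p).lTensor B)).2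
      (fun a _ b hb => ?_) (delta_mem_range_mapIncl_of_mem_coradFilt_succ hd.coassoc_apply hw)
    obtain ⟨i, rfl⟩ := Nat.exists_eq_add_one_of_ne_zero (by omega : j ≠ 0)
    simp [primProj_prec_of_delta_eq_zero hd hp, ih hb i (by omega)]

lemma prec_mem_primPrec {a : B} (ha : a ∈ primPrec prec delta) (y : B) :
    prec a y ∈ primPrec prec delta := by
  refine (Submodule.span_le (p := (primPrec prec delta).comap (prec.flip y))).2 ?_ ha
  rintro _ ⟨p, hp, w, rfl⟩
  exact Submodule.subset_span ⟨p, hp, _, hd.ax1 p w y⟩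

omit hd in
lemma prec_add_succ_mem_precSpan (hax2 : ∀ x y z : B, prec (succ x y) z = succ x (prec y z))
    (x : B) {y : B} (hy : y ∈ precSpan prec) : (prec + succ) x y ∈ precSpan prec := by
  refine add_mem (Submodule.subset_span ⟨x, y, rfl⟩) ?_
  refine (Submodule.span_le (p := (precSpan prec).comap (succ x))).2 ?_ hy
  rintro _ ⟨a, b, rfl⟩
  exact Submodule.subset_span ⟨succ x a, b, (hax2 x a b).symm⟩

variable (hconn : IsConnectedCoalg delta)
include hconn

lemma eventually_delta_primProj_and_sub_mem (y : B) :
    ∀ᶠ k in Filter.atTop,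
      delta (primProj prec delta k y) = 0 ∧ y - primProj prec delta k y ∈ primPrec prec delta := by
  obtain ⟨n, hn⟩ := hconn y
  filter_upwards [Filter.eventually_gt_atTop n] with k hk
  exact ⟨delta_primProj_eq_zero hd hn hk, sub_primProj_mem_primPrec hd hn hk⟩

lemma eventually_primProj_eq_zero {z : B} (hz : z ∈ primPrec prec delta) :
    ∀ᶠ k in Filter.atTop, primProj prec delta k z = 0 := by
  induction hz using Submodule.span_induction with
  | mem z hz =>
    obtain ⟨p, hp, w, rfl⟩ := hz
    obtain ⟨n, hn⟩ := hconn w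
    filter_upwards [Filter.eventually_gt_atTop (n + 1)] with k hk
    exact primProj_prec_eq_zero hd hp hn hk
  | zero => simp
  | add x y _ _ hx hy =>
    filter_upwards [hx, hy] with k hx hy
    simp [hx, hy]
  | smul c x _ hx =>
    filter_upwards [hx] with k hx
    simp [hx]

theorem ker_sup_primPrec_eq_top : ker delta ⊔ primPrec prec delta = ⊤ := by
  refine eq_top_iff.2 fun x _ => ?_
  obtain ⟨k, hprim, hsub⟩ := (eventually_delta_primProj_and_sub_mem hd hconn x).exists
  exact Submodule.mem_sup.2 ⟨_, hprim, _, hsub, add_sub_cancel _ _⟩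

theorem disjoint_ker_primPrec : Disjoint (ker delta) (primPrec prec delta) := by
  refine Submodule.disjoint_def.2 fun x hx hx' => ?_
  obtain ⟨k, hzero, hk⟩ :=
    ((eventually_primProj_eq_zero hd hconn hx').and (Filter.eventually_ge_atTop 1)).exists
  obtain ⟨j, rfl⟩ := Nat.exists_eq_add_one_of_ne_zero (by omega : k ≠ 0)
  rwa [primProj_succ_of_delta_eq_zero _ hx] at hzero

theorem primPrec_eq_precSpan : primPrec prec delta = precSpan prec := by
  refine le_antisymm (Submodule.span_mono ?_) (Submodule.span_le.2 ?_)
  · rintro _ ⟨p, -, w, rfl⟩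
    exact ⟨p, w, rfl⟩
  · rintro _ ⟨x, y, rfl⟩
    obtain ⟨p, hp, a, ha, rfl⟩ :=
      Submodule.mem_sup.1 (ker_sup_primPrec_eq_top hd hconn ▸ Submodule.mem_top (x := x))
    rw [map_add, LinearMap.add_apply]
    exact add_mem (Submodule.subset_span ⟨p, hp, y, rfl⟩) (prec_mem_primPrec hd ha y)

end Dendriform

open Dendriform in
theorem stmt18_general (prec succ : B →ₗ[K] B →ₗ[K] B) (delta : B →ₗ[K] B ⊗[K] B)
    (hd : IsDendriformHopf prec succ delta) (hconn : IsConnectedCoalg delta) :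
    letI A2 : Submodule K B :=
      Submodule.span K {z | ∃ p ∈ LinearMap.ker delta, ∃ w : B, z = prec p w}
    (LinearMap.ker delta ⊔ A2 = ⊤ ∧ Disjoint (LinearMap.ker delta) A2) ∧
    A2 = Submodule.span K {z | ∃ x y : B, z = prec x y} ∧
    (∀ x : B, ∀ y ∈ A2, (prec + succ) x y ∈ A2) := by
  have hA2 : primPrec prec delta = precSpan prec := primPrec_eq_precSpan hd hconn
  refine ⟨⟨ker_sup_primPrec_eq_top hd hconn, disjoint_ker_primPrec hd hconn⟩, hA2, ?_⟩
  intro x y (hy : y ∈ primPrec prec delta)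
  show _ ∈ primPrec prec delta
  rw [hA2] at hy ⊢
  exact prec_add_succ_mem_precSpan hd.ax2 x hy

/-- in a connected dendriform Hopf algebra, with A^{≺2} = Prim(A) ≺ A_+:
(1) A_+ = Prim(A) ⊕ A^{≺2}; (2) A^{≺2} = A_+ ≺ A_+; (3) A^{≺2} is a left ideal for *. -/
theorem stmt18 [CharZero K] (prec succ : B →ₗ[K] B →ₗ[K] B) (delta : B →ₗ[K] B ⊗[K] B)
    (hd : IsDendriformHopf prec succ delta) (hconn : IsConnectedCoalg delta) :
    letI A2 : Submodule K B :=
      Submodule.span K {z | ∃ p ∈ LinearMap.ker delta, ∃ w : B, z = prec p w}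
    (LinearMap.ker delta ⊔ A2 = ⊤ ∧ Disjoint (LinearMap.ker delta) A2) ∧
    A2 = Submodule.span K {z | ∃ x y : B, z = prec x y} ∧
    (∀ x : B, ∀ y ∈ A2, (prec + succ) x y ∈ A2) :=
  stmt18_general prec succ delta hd hconn
end
end
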